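/- Let Z₁, Z₂, …, Z be random elements in a countable product of measurable spaces (E¹,𝓔¹)⊗(E²,𝓔²)⊗…⊗(E^∞,𝓔^∞), and write Zᵏ = (Z¹,…,Zᵏ) for the first k coordinates. Then Zₙᵏ → Zᵏ in density as n → ∞ for every k ∈ ℕ if and only if there exist integers 0 ≤ k₁ ≤ k₂ ≤ … → ∞, a coupling (Ẑ₁^{k₁}, Ẑ₂^{k₂}, …, Ẑ) of Z₁^{k₁}, Z₂^{k₂}, …, Z, and an ℕ-valued random variable N such that Ẑₙ^{kₙ} = Ẑ^{kₙ} for all n ≥ N. -/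

import Mathlib

/-!
For probability measures, `μₙ → μ` in density iff for every `a < 1` some measure `σ ≤ μ` of mass
`> a` lies below all `μₙ` with `n` large: the densities `⨅ m ≥ n, fₘ` give such minorants, and
conversely the minorants force `g ≤ liminf fₙ` a.e., with equality by Fatou.

Given convergence at every level `k`, pick a minorant `σₖ` of the `k`-marginals with defect
`2⁻ᵏ`, valid from time `nₖ` on, and let `kₙ` be the largest level valid at time `n`. The pulled
back densities `tₖ = dσₖ/dQᵏ ∘ projₖ` have summable defects, so `tₖ → 1` a.s. (Borel–Cantelli)
and `rₙ = ⨅ m ≥ n, t_{kₘ}` increases to `1`. Draw `Z ~ Q` and a time `N` with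
`P(N ≤ n | Z) = rₙ(Z)`, and set `Ẑₙ = Z^{kₙ}` on `{N ≤ n}`: its sub-law lies below `σ_{kₙ}`, hence
below the law of `Zₙ^{kₙ}`, and the missing mass is supplied by independent samples of the
normalised remainder. Conversely, the coupled variables agree on `{N ≤ n₀}`, so the law of `Zˡ`
restricted to that event is a common minorant.
-/

open MeasureTheory Filter
open scoped ENNReal

/-- `μs n → μ` in density: w.r.t. some σ-finite dominating measure, the liminf of
the densities of the `μs n` equals the density of `μ` almost everywhere. -/
def ConvInDensity {α : Type*} [MeasurableSpace α] (μs : ℕ → Measure α) (μ : Measure α) : Prop :=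
  ∃ (lam : Measure α) (f : ℕ → α → ℝ≥0∞) (g : α → ℝ≥0∞),
    SigmaFinite lam ∧ (∀ n, Measurable (f n)) ∧ Measurable g ∧
    (∀ n, μs n = lam.withDensity (f n)) ∧ μ = lam.withDensity g ∧
    (∀ᵐ x ∂lam, liminf (fun n => f n x) atTop = g x)

/-- Projection onto the first `k` coordinates of an element of
`(E¹ × E² × ⋯) × E^∞`. -/
def proj (E : ℕ → Type) (Einf : Type) (k : ℕ) (z : (∀ i, E i) × Einf) :
    ∀ i : Fin k, E i := fun i => z.1 i

open Set
open scoped Topology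

universe u

section Measure

variable {α β : Type*} [MeasurableSpace α] [MeasurableSpace β]

lemma map_withDensity_comp (μ : Measure α) {g : α → β} (hg : Measurable g) {f : β → ℝ≥0∞}
    (hf : Measurable f) : (μ.withDensity (f ∘ g)).map g = (μ.map g).withDensity f := by
  ext s hs
  rw [Measure.map_apply hg hs, withDensity_apply _ hs, withDensity_apply _ (hg hs),
    setLIntegral_map hs hf hg]
  rfl

lemma rnDeriv_le_rnDeriv_of_le {μ ν ξ : Measure α} [IsFiniteMeasure ν] [SigmaFinite ξ]
    (h : μ ≤ ν) : μ.rnDeriv ξ ≤ᵐ[ξ] ν.rnDeriv ξ := by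
  have : IsFiniteMeasure μ := isFiniteMeasure_of_le ν h
  have hadd := Measure.rnDeriv_add (ν - μ) μ ξ
  rw [Measure.sub_add_cancel_of_le h] at hadd
  filter_upwards [hadd] with x hx
  rw [hx]
  exact le_add_self

lemma exists_isProbabilityMeasure_eq_add_smul {ρ μ : Measure α} [IsProbabilityMeasure μ]
    (h : ρ ≤ μ) : ∃ θ : Measure α, IsProbabilityMeasure θ ∧ μ = ρ + (1 - ρ univ) • θ := by
  have : IsFiniteMeasure ρ := isFiniteMeasure_of_le μ h
  have hμ : μ - ρ + ρ = μ := Measure.sub_add_cancel_of_le h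
  have hc : (μ - ρ) univ = 1 - ρ univ := by
    refine ENNReal.eq_sub_of_add_eq (measure_ne_top ρ univ) ?_
    rw [← Measure.add_apply, hμ, measure_univ]
  by_cases h0 : (μ - ρ) univ = 0
  · refine ⟨μ, inferInstance, ?_⟩
    rw [← hc, h0, zero_smul, add_zero, ← hμ, Measure.measure_univ_eq_zero.1 h0, zero_add]
  · refine ⟨((μ - ρ) univ)⁻¹ • (μ - ρ), ⟨?_⟩, ?_⟩
    · rw [Measure.smul_apply, smul_eq_mul, ENNReal.inv_mul_cancel h0 (measure_ne_top _ _)]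
    · rw [← hc, smul_smul, ENNReal.mul_inv_cancel h0 (measure_ne_top _ _), one_smul, add_comm,
        hμ]

lemma exists_withDensity_map_eq_of_le (Q : Measure α) [IsFiniteMeasure Q] {p : α → β}
    (hp : Measurable p) {σ : Measure β} (hσ : σ ≤ Q.map p) :
    ∃ t : α → ℝ≥0∞, Measurable t ∧ t ≤ᵐ[Q] 1 ∧ (Q.withDensity t).map p = σ := by
  have : IsFiniteMeasure σ := isFiniteMeasure_of_le _ hσ
  refine ⟨σ.rnDeriv (Q.map p) ∘ p, (Measure.measurable_rnDeriv _ _).comp hp,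
    ae_of_ae_map hp.aemeasurable (Measure.rnDeriv_le_one_of_le hσ), ?_⟩
  rw [map_withDensity_comp Q hp (Measure.measurable_rnDeriv _ _),
    Measure.withDensity_rnDeriv_eq _ _ (Measure.absolutelyContinuous_of_le hσ)]

lemma ae_tendsto_one_of_tsum_lintegral_ne_top {μ : Measure α} {t : ℕ → α → ℝ≥0∞}
    (ht : ∀ k, Measurable (t k)) (hle : ∀ k, t k ≤ᵐ[μ] 1)
    (hsum : ∑' k, ∫⁻ x, 1 - t k x ∂μ ≠ ∞) :
    ∀ᵐ x ∂μ, Tendsto (fun k => t k x) atTop (𝓝 1) := by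
  have hmeas : ∀ k, Measurable fun x => 1 - t k x := fun k => measurable_const.sub (ht k)
  rw [← lintegral_tsum fun k => (hmeas k).aemeasurable] at hsum
  filter_upwards [ae_lt_top (Measurable.tsum hmeas) hsum, ae_all_iff.2 hle]
    with x hx hxle
  have hdefect := ENNReal.tendsto_atTop_zero_of_tsum_ne_top hx.ne
  have := ENNReal.Tendsto.sub tendsto_const_nhds hdefect (Or.inl ENNReal.one_ne_top)
  simpa [ENNReal.sub_sub_cancel ENNReal.one_ne_top (hxle _)] using this

lemma exists_monotone_density_map_le {Y : ℕ → Type*} [∀ k, MeasurableSpace (Y k)] (Q : Measure α)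
    [IsProbabilityMeasure Q] {p : ∀ k, α → Y k} (hp : ∀ k, Measurable (p k))
    {σ : ∀ k, Measure (Y k)} (hσ : ∀ k, σ k ≤ Q.map (p k)) (hsum : ∑' k, (1 - σ k univ) ≠ ∞)
    {k : ℕ → ℕ} (hk : Tendsto k atTop atTop) :
    ∃ r : ℕ → α → ℝ≥0∞, (∀ j, Measurable (r j)) ∧ Monotone r ∧ (∀ᵐ x ∂Q, ⨆ j, r j x = 1) ∧
      ∀ j, (Q.withDensity (r j)).map (p (k j)) ≤ σ (k j) := by
  choose t ht hle hmap using fun i => exists_withDensity_map_eq_of_le Q (hp i) (hσ i)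
  have hdefect : ∀ i, ∫⁻ x, 1 - t i x ∂Q = 1 - σ i univ := by
    intro i
    have hint : ∫⁻ x, t i x ∂Q = σ i univ := by
      rw [← hmap, Measure.map_apply (hp i) MeasurableSet.univ, preimage_univ,
        withDensity_apply _ MeasurableSet.univ, setLIntegral_univ]
    have := lintegral_sub (ht i)
      (hint ▸ ne_top_of_le_ne_top (measure_ne_top _ univ) (Measure.le_iff'.1 (hσ i) univ)) (hle i)
    simpa only [Pi.sub_apply, Pi.one_apply, lintegral_one, measure_univ, hint] using this
  have hlim := ae_tendsto_one_of_tsum_lintegral_ne_top ht hle (by simpa only [hdefect])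
  refine ⟨fun j x => ⨅ i ≥ j, t (k i) x, fun j => ?_, fun j j' hj x => ?_, ?_, fun j => ?_⟩
  · exact Measurable.iInf fun i => Measurable.iInf fun _ => ht (k i)
  · exact biInf_mono fun i hi => hj.trans hi
  · filter_upwards [hlim] with x hx
    rw [← liminf_eq_iSup_iInf_of_nat]
    exact (hx.comp hk).liminf_eq
  · rw [← hmap]
    exact Measure.map_mono (withDensity_mono (ae_of_all _ fun x => iInf₂_le j le_rfl)) (hp _)

def increments (r : ℕ → ℝ≥0∞) : ℕ → ℝ≥0∞
  | 0 => r 0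
  | m + 1 => r (m + 1) - r m

lemma sum_range_succ_increments {r : ℕ → ℝ≥0∞} (hr : Monotone r) (n : ℕ) :
    ∑ m ∈ Finset.range (n + 1), increments r m = r n := by
  induction n with
  | zero => simp [increments]
  | succ n ih => rw [Finset.sum_range_succ, ih, increments, add_tsub_cancel_of_le (hr n.le_succ)]

lemma exists_measure_prod_Iic_eq_setLIntegral (Q : Measure α) {r : ℕ → α → ℝ≥0∞}
    (hr : ∀ n, Measurable (r n)) (hmono : Monotone r) (hsup : ∀ᵐ x ∂Q, ⨆ n, r n x = 1) :
    ∃ κ : Measure (α × ℕ), κ.map Prod.fst = Q ∧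
      ∀ n s, MeasurableSet s → κ (s ×ˢ Iic n) = ∫⁻ x in s, r n x ∂Q := by
  let d : ℕ → α → ℝ≥0∞ := fun m x => increments (fun n => r n x) m
  have hd : ∀ m, Measurable (d m) := by
    rintro (_ | m)
    · exact hr 0
    · exact (hr (m + 1)).sub (hr m)
  -- the joint law of `(Z, N)` with `P(N = m | Z = x) = d m x`
  let κ := Measure.sum fun m => (Q.withDensity (d m)).map fun x => (x, m)
  have hκ : ∀ n s, MeasurableSet s → κ (s ×ˢ Iic n) = ∫⁻ x in s, r n x ∂Q := by
    intro n s hs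
    rw [Measure.sum_apply _ (hs.prod measurableSet_Iic)]
    simp_rw [Measure.map_apply measurable_prodMk_right (hs.prod measurableSet_Iic),
      mk_preimage_prod_left_eq_if]
    rw [tsum_eq_sum (s := Finset.range (n + 1)) fun m hm => by
      simp only [Finset.mem_range] at hm; simp [show ¬m ≤ n by omega]]
    rw [Finset.sum_congr rfl fun m hm => by
      rw [if_pos (by simpa [Nat.lt_succ_iff] using hm), withDensity_apply _ hs],
      ← lintegral_finsetSum _ fun m _ => hd m]
    exact setLIntegral_congr_fun hs fun x _ => sum_range_succ_increments (fun i j h => hmono h x) n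
  refine ⟨κ, ?_, hκ⟩
  ext s hs
  have hunion : s ×ˢ (univ : Set ℕ) = ⋃ n, s ×ˢ Iic n := by
    rw [← prod_iUnion, iUnion_Iic]
  rw [Measure.map_apply measurable_fst hs, ← prod_univ, hunion,
    Monotone.measure_iUnion fun m n h => Set.prod_mono le_rfl (Iic_subset_Iic.2 h)]
  simp_rw [hκ _ s hs]
  rw [← lintegral_iSup hr hmono, ← setLIntegral_one s]
  exact setLIntegral_congr_fun_ae hs (hsup.mono fun x hx _ => hx)

end Measure

lemma exists_monotone_tendsto_atTop_comp_le {n : ℕ → ℕ} (h0 : n 0 = 0) :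
    ∃ k : ℕ → ℕ, Monotone k ∧ Tendsto k atTop atTop ∧ ∀ j, n (k j) ≤ j := by
  classical
  refine ⟨fun j => Nat.findGreatest (fun i => n i ≤ j) j, fun i j hij => ?_, ?_, fun j => ?_⟩
  · exact Nat.findGreatest_mono (fun _ h => h.trans hij) hij
  · exact tendsto_atTop_atTop.2 fun K =>
      ⟨max K (n K), fun j hj => Nat.le_findGreatest (le_of_max_le_left hj) (le_of_max_le_right hj)⟩
  · exact Nat.findGreatest_spec (P := fun i => n i ≤ j) (Nat.zero_le j) (by simp [h0])


section ConvInDensity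

variable {α : Type*} [MeasurableSpace α] {μs : ℕ → Measure α} {μ : Measure α}

lemma ConvInDensity.exists_le (h : ConvInDensity μs μ) {a : ℝ≥0∞} (ha : a < μ univ) :
    ∃ σ ≤ μ, (∀ᶠ n in atTop, σ ≤ μs n) ∧ a < σ univ := by
  obtain ⟨ξ, f, g, -, hf, -, hfμ, hgμ, hlim⟩ := h
  have hmeas : ∀ n, Measurable fun x => ⨅ m ≥ n, f m x := fun n =>
    Measurable.iInf fun m => Measurable.iInf fun _ => hf m
  have hsup : ⨆ n, ξ.withDensity (fun x => ⨅ m ≥ n, f m x) univ = μ univ := by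
    simp_rw [withDensity_apply _ MeasurableSet.univ, setLIntegral_univ]
    rw [← lintegral_iSup hmeas fun n n' hn x => biInf_mono fun m hm => hn.trans hm, hgμ,
      withDensity_apply _ MeasurableSet.univ, setLIntegral_univ]
    refine lintegral_congr_ae ?_
    filter_upwards [hlim] with x hx
    rw [← hx, liminf_eq_iSup_iInf_of_nat]
  obtain ⟨n, hn⟩ := lt_iSup_iff.1 (hsup ▸ ha)
  refine ⟨_, ?_, eventually_atTop.2 ⟨n, fun m hm => ?_⟩, hn⟩
  · rw [hgμ]
    refine withDensity_mono ?_
    filter_upwards [hlim] with x hx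
    rw [← hx, liminf_eq_iSup_iInf_of_nat]
    exact le_iSup (fun n => ⨅ m ≥ n, f m x) n
  · rw [hfμ m]
    exact withDensity_mono (ae_of_all _ fun x => iInf₂_le m hm)

lemma ae_rnDeriv_le_liminf_rnDeriv {ξ : Measure α} [IsFiniteMeasure ξ]
    [∀ n, IsFiniteMeasure (μs n)] [IsProbabilityMeasure μ] (hμξ : μ ≪ ξ)
    (h : ∀ a < 1, ∃ σ ≤ μ, (∀ᶠ n in atTop, σ ≤ μs n) ∧ a < σ univ) :
    μ.rnDeriv ξ ≤ᵐ[ξ] fun x => liminf (fun n => (μs n).rnDeriv ξ x) atTop := by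
  let w := fun x => min (μ.rnDeriv ξ x) (liminf (fun n => (μs n).rnDeriv ξ x) atTop)
  have hg1 : ∫⁻ x, μ.rnDeriv ξ x ∂ξ = 1 := by rw [Measure.lintegral_rnDeriv hμξ, measure_univ]
  have hw : ∫⁻ x, μ.rnDeriv ξ x ∂ξ ≤ ∫⁻ x, w x ∂ξ := by
    refine hg1 ▸ le_of_forall_lt fun a ha => ?_
    obtain ⟨σ, hσμ, hσ, haσ⟩ := h a ha
    obtain ⟨n₀, hn₀⟩ := eventually_atTop.1 hσ
    have : IsFiniteMeasure σ := isFiniteMeasure_of_le μ hσμ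
    have hle : ∀ᵐ x ∂ξ, ∀ n, n₀ ≤ n → σ.rnDeriv ξ x ≤ (μs n).rnDeriv ξ x :=
      ae_all_iff.2 fun n => by
        by_cases hn : n₀ ≤ n
        · filter_upwards [rnDeriv_le_rnDeriv_of_le (hn₀ n hn)] with x hx _ using hx
        · exact ae_of_all _ fun x h => absurd h hn
    calc a < σ univ := haσ
      _ = ∫⁻ x, σ.rnDeriv ξ x ∂ξ :=
        (Measure.lintegral_rnDeriv ((Measure.absolutelyContinuous_of_le hσμ).trans hμξ)).symm
      _ ≤ ∫⁻ x, w x ∂ξ := by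
        refine lintegral_mono_ae ?_
        filter_upwards [rnDeriv_le_rnDeriv_of_le hσμ, hle] with x hxg hxf
        exact le_min hxg (le_liminf_of_le (h := eventually_atTop.2 ⟨n₀, hxf⟩))
  have hwg := ae_eq_of_ae_le_of_lintegral_le (ae_of_all _ fun x => min_le_left _ _)
    (ne_top_of_le_ne_top (hg1 ▸ ENNReal.one_ne_top) (lintegral_mono fun x => min_le_left _ _))
    (Measure.measurable_rnDeriv _ _).aemeasurable hw
  filter_upwards [hwg] with x hx
  exact hx ▸ min_le_right _ _

lemma convInDensity_of_forall_lt [∀ n, IsProbabilityMeasure (μs n)] [IsProbabilityMeasure μ]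
    (h : ∀ a < 1, ∃ σ ≤ μ, (∀ᶠ n in atTop, σ ≤ μs n) ∧ a < σ univ) : ConvInDensity μs μ := by
  let ξ := (μ + Measure.sum μs).toFinite
  have hμξ : μ ≪ ξ := (Measure.absolutelyContinuous_of_le (Measure.le_add_right le_rfl)).trans
    (absolutelyContinuous_toFinite _)
  have hμsξ : ∀ n, μs n ≪ ξ := fun n => (Measure.absolutelyContinuous_of_le
    ((Measure.le_sum μs n).trans (Measure.le_add_left le_rfl))).trans
      (absolutelyContinuous_toFinite _)
  have hf : ∀ n, Measurable ((μs n).rnDeriv ξ) := fun n => Measure.measurable_rnDeriv _ _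
  have hg1 : ∫⁻ x, μ.rnDeriv ξ x ∂ξ = 1 := by rw [Measure.lintegral_rnDeriv hμξ, measure_univ]
  have hfatou : ∫⁻ x, liminf (fun n => (μs n).rnDeriv ξ x) atTop ∂ξ ≤ ∫⁻ x, μ.rnDeriv ξ x ∂ξ := by
    refine (lintegral_liminf_le hf).trans ?_
    simp_rw [Measure.lintegral_rnDeriv (hμsξ _), measure_univ, liminf_const, hg1, le_rfl]
  refine ⟨ξ, fun n => (μs n).rnDeriv ξ, μ.rnDeriv ξ, inferInstance, hf,
    Measure.measurable_rnDeriv _ _, fun n => (Measure.withDensity_rnDeriv_eq _ _ (hμsξ n)).symm,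
    (Measure.withDensity_rnDeriv_eq _ _ hμξ).symm, ?_⟩
  exact (ae_eq_of_ae_le_of_lintegral_le (ae_rnDeriv_le_liminf_rnDeriv hμξ h)
    (hg1 ▸ ENNReal.one_ne_top) (Measurable.liminf hf).aemeasurable hfatou).symm

theorem convInDensity_iff [∀ n, IsProbabilityMeasure (μs n)] [IsProbabilityMeasure μ] :
    ConvInDensity μs μ ↔ ∀ a < 1, ∃ σ ≤ μ, (∀ᶠ n in atTop, σ ≤ μs n) ∧ a < σ univ :=
  ⟨fun h _ ha => h.exists_le (measure_univ (μ := μ) ▸ ha), convInDensity_of_forall_lt⟩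

end ConvInDensity

lemma convInDensity_of_coupling {Ω α : Type*} [MeasurableSpace Ω] [MeasurableSpace α]
    {Pr : Measure Ω} [IsProbabilityMeasure Pr] {μs : ℕ → Measure α} {μ : Measure α}
    [∀ n, IsProbabilityMeasure (μs n)] [IsProbabilityMeasure μ]
    {W : Ω → α} {Ws : ℕ → Ω → α} {N : Ω → ℕ} (hW : Measurable W)
    (hWs : ∀ n, Measurable (Ws n)) (hN : Measurable N) (hlaw : ∀ᶠ n in atTop, Pr.map (Ws n) = μs n)
    (hμ : Pr.map W = μ) (heq : ∀ᵐ ω ∂Pr, ∀ n, N ω ≤ n → Ws n ω = W ω) :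
    ConvInDensity μs μ := by
  refine convInDensity_of_forall_lt fun a ha => ?_
  have hS : ∀ n, MeasurableSet {ω | N ω ≤ n} := fun n => hN measurableSet_Iic
  have hsup : ⨆ n, Pr {ω | N ω ≤ n} = 1 := by
    rw [← Monotone.measure_iUnion (s := fun n => {ω | N ω ≤ n})
      fun m n h ω (hω : N ω ≤ m) => hω.trans h, ← measure_univ (μ := Pr)]
    exact congrArg Pr (eq_univ_of_forall fun ω => mem_iUnion.2 ⟨N ω, le_refl (N ω)⟩)
  obtain ⟨n₀, hn₀⟩ := lt_iSup_iff.1 (hsup ▸ ha)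
  refine ⟨(Pr.restrict {ω | N ω ≤ n₀}).map W, hμ ▸ Measure.map_mono Measure.restrict_le_self hW,
    ?_, ?_⟩
  · filter_upwards [hlaw, eventually_ge_atTop n₀] with n hn hn₀n
    rw [← hn, Measure.map_congr (g := Ws n)]
    · exact Measure.map_mono Measure.restrict_le_self (hWs n)
    · filter_upwards [ae_restrict_mem (hS n₀), ae_restrict_of_ae heq] with ω hω hωeq
      exact (hωeq n (hω.trans hn₀n)).symm
  · rwa [Measure.map_apply hW MeasurableSet.univ, Measure.restrict_apply (hW MeasurableSet.univ),
      preimage_univ, univ_inter]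

theorem exists_coupling_of_withDensity_map_le {X : Type u} [MeasurableSpace X]
    {Y : ℕ → Type u} [∀ n, MeasurableSpace (Y n)] (Q : Measure X) [IsProbabilityMeasure Q]
    (μ : ∀ n, Measure (Y n)) [∀ n, IsProbabilityMeasure (μ n)] {π : ∀ n, X → Y n}
    (hπ : ∀ n, Measurable (π n)) {r : ℕ → X → ℝ≥0∞} (hr : ∀ n, Measurable (r n))
    (hmono : Monotone r) (hsup : ∀ᵐ x ∂Q, ⨆ n, r n x = 1)
    (hle : ∀ n, (Q.withDensity (r n)).map (π n) ≤ μ n) :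
    ∃ (Ω : Type u) (_ : MeasurableSpace Ω) (P : Measure Ω), IsProbabilityMeasure P ∧
      ∃ (Zh : ∀ n, Ω → Y n) (Z : Ω → X) (N : Ω → ℕ),
        (∀ n, Measurable (Zh n)) ∧ Measurable Z ∧ Measurable N ∧
        (∀ n, P.map (Zh n) = μ n) ∧ P.map Z = Q ∧ ∀ ω n, N ω ≤ n → Zh n ω = π n (Z ω) := by
  obtain ⟨κ, hκQ, hκ⟩ := exists_measure_prod_Iic_eq_setLIntegral Q hr hmono hsup
  have : IsProbabilityMeasure κ := ⟨by
    rw [← preimage_univ (f := Prod.fst), ← Measure.map_apply measurable_fst MeasurableSet.univ,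
      hκQ, measure_univ]⟩
  choose θ hθ hμθ using fun n => exists_isProbabilityMeasure_eq_add_smul (hle n)
  let Zh : ∀ n, (X × ℕ) × (∀ n, Y n) → Y n := fun n ω => if ω.1.2 ≤ n then π n ω.1.1 else ω.2 n
  have hZh : ∀ n, Measurable (Zh n) := fun n =>
    Measurable.ite (measurableSet_le (by fun_prop) measurable_const) ((hπ n).comp (by fun_prop))
      (by fun_prop)
  refine ⟨(X × ℕ) × ∀ n, Y n, inferInstance, κ.prod (Measure.infinitePi θ), inferInstance,
    Zh, fun ω => ω.1.1, fun ω => ω.1.2, hZh, by fun_prop, by fun_prop, fun n => ?_, ?_,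
    fun ω n h => if_pos h⟩
  · ext A hA
    have hpre : Zh n ⁻¹' A = ((π n ⁻¹' A) ×ˢ Iic n) ×ˢ univ ∪
        (univ ×ˢ (Iic n)ᶜ) ×ˢ ((fun y => y n) ⁻¹' A) := by
      ext ω
      by_cases h : ω.1.2 ≤ n
      · simp [Zh, h]
      · simp [Zh, h, not_le.1 h]
    have hdisj : Disjoint (((π n ⁻¹' A) ×ˢ Iic n) ×ˢ (univ : Set (∀ n, Y n)))
        ((univ ×ˢ (Iic n)ᶜ) ×ˢ ((fun y => y n) ⁻¹' A)) := by
      rw [Set.disjoint_left]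
      rintro ω ⟨⟨-, h⟩, -⟩ ⟨⟨-, h'⟩, -⟩
      exact h' h
    have hcompl : univ ×ˢ (Iic n)ᶜ = (univ ×ˢ Iic n : Set (X × ℕ))ᶜ := by
      ext ω; simp
    rw [Measure.map_apply (hZh n) hA, hpre, measure_union hdisj
      ((MeasurableSet.univ.prod measurableSet_Iic.compl).prod (measurable_pi_apply n hA)),
      Measure.prod_prod, Measure.prod_prod, measure_univ, mul_one, hcompl,
      measure_compl (MeasurableSet.univ.prod measurableSet_Iic) (measure_ne_top _ _),
      measure_univ, hκ n _ ((hπ n) hA), hκ n _ MeasurableSet.univ,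
      ← Measure.map_apply (measurable_pi_apply n) hA, Measure.infinitePi_map_eval, hμθ n,
      Measure.add_apply, Measure.smul_apply, smul_eq_mul,
      Measure.map_apply (hπ n) hA, Measure.map_apply (hπ n) MeasurableSet.univ,
      withDensity_apply _ ((hπ n) hA), preimage_univ, withDensity_apply _ MeasurableSet.univ]
  · rw [show (fun ω => ω.1.1) = Prod.fst ∘ Prod.fst from rfl,
      ← Measure.map_map measurable_fst measurable_fst, Measure.map_fst_prod, measure_univ,
      one_smul, hκQ]

theorem exists_coupling_of_forall_convInDensity {X : Type u} [MeasurableSpace X]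
    {Y : ℕ → Type u} [∀ k, MeasurableSpace (Y k)] (Qn : ℕ → Measure X) (Q : Measure X)
    [∀ n, IsProbabilityMeasure (Qn n)] [IsProbabilityMeasure Q] {p : ∀ k, X → Y k}
    (hp : ∀ k, Measurable (p k))
    (h : ∀ k, ConvInDensity (fun n => (Qn n).map (p k)) (Q.map (p k))) :
    ∃ k : ℕ → ℕ, Monotone k ∧ Tendsto k atTop atTop ∧
      ∃ (Ω : Type u) (_ : MeasurableSpace Ω) (Pr : Measure Ω), IsProbabilityMeasure Pr ∧
        ∃ (Zh : ∀ n, Ω → Y (k n)) (Z : Ω → X) (N : Ω → ℕ),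
          (∀ n, Measurable (Zh n)) ∧ Measurable Z ∧ Measurable N ∧
          (∀ n, Pr.map (Zh n) = (Qn n).map (p (k n))) ∧ Pr.map Z = Q ∧
          (∀ᵐ ω ∂Pr, ∀ n, N ω ≤ n → Zh n ω = p (k n) (Z ω)) := by
  classical
  have := fun k n => Measure.isProbabilityMeasure_map (μ := Qn n) (hp k).aemeasurable
  have := fun k => Measure.isProbabilityMeasure_map (μ := Q) (hp k).aemeasurable
  -- level `k` is usable from time `j` on with defect at most `2⁻¹ ^ k`
  let good : ℕ → ℕ → Prop := fun k j => ∃ σ ≤ Q.map (p k),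
    (∀ n, j ≤ n → σ ≤ (Qn n).map (p k)) ∧ 1 - 2⁻¹ ^ k ≤ σ univ
  have hgood : ∀ k, ∃ j, good k j := fun k => by
    obtain ⟨σ, hσ, hev, hlt⟩ := convInDensity_iff.1 (h k) (1 - 2⁻¹ ^ k)
      (ENNReal.sub_lt_self ENNReal.one_ne_top one_ne_zero (pow_ne_zero _ (by simp)))
    obtain ⟨j, hj⟩ := eventually_atTop.1 hev
    exact ⟨j, σ, hσ, hj, hlt.le⟩
  have hgood₀ : Nat.find (hgood 0) = 0 :=
    (Nat.find_eq_zero _).2 ⟨0, Measure.zero_le _, fun _ _ => Measure.zero_le _, by simp⟩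
  choose σ hσ hσQn hσ1 using fun k => Nat.find_spec (hgood k)
  obtain ⟨k, hkmono, hk, hkle⟩ :=
    exists_monotone_tendsto_atTop_comp_le (n := fun k => Nat.find (hgood k)) hgood₀
  have hsum : ∑' k, (1 - σ k univ) ≠ ∞ := by
    refine ne_top_of_le_ne_top ?_ (ENNReal.tsum_le_tsum fun k => tsub_le_iff_tsub_le.1 (hσ1 k))
    rw [ENNReal.tsum_geometric, ENNReal.one_sub_inv_two, inv_inv]
    exact ENNReal.ofNat_ne_top
  obtain ⟨r, hr, hrmono, hrsup, hrle⟩ := exists_monotone_density_map_le Q hp hσ hsum hk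
  obtain ⟨Ω, _, Pr, hPr, Zh, Z, N, hZh, hZ, hN, hlawZh, hlawZ, heq⟩ :=
    exists_coupling_of_withDensity_map_le Q (fun n => (Qn n).map (p (k n))) (fun n => hp (k n))
      hr hrmono hrsup fun n => (hrle n).trans (hσQn _ _ (hkle n))
  exact ⟨k, hkmono, hk, Ω, _, Pr, hPr, Zh, Z, N, hZh, hZ, hN, hlawZh, hlawZ, ae_of_all _ heq⟩

lemma measurable_proj (E : ℕ → Type) [∀ i, MeasurableSpace (E i)] (Einf : Type)
    [MeasurableSpace Einf] (k : ℕ) : Measurable (proj E Einf k) :=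
  measurable_pi_lambda _ fun i => (measurable_pi_apply (i : ℕ)).comp measurable_fst

theorem convInDensity_proj_of_coupling (E : ℕ → Type) [∀ i, MeasurableSpace (E i)]
    (Einf : Type) [MeasurableSpace Einf]
    (Qn : ℕ → Measure ((∀ i, E i) × Einf)) (Q : Measure ((∀ i, E i) × Einf))
    [∀ n, IsProbabilityMeasure (Qn n)] [IsProbabilityMeasure Q] {k : ℕ → ℕ}
    (hk : Tendsto k atTop atTop) {Ω : Type*} [MeasurableSpace Ω] (Pr : Measure Ω)
    [IsProbabilityMeasure Pr] {Zh : ∀ n, Ω → (∀ i : Fin (k n), E i)}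
    {Z : Ω → (∀ i, E i) × Einf} {N : Ω → ℕ} (hZh : ∀ n, Measurable (Zh n)) (hZ : Measurable Z)
    (hN : Measurable N) (hlawZh : ∀ n, Pr.map (Zh n) = (Qn n).map (proj E Einf (k n)))
    (hlawZ : Pr.map Z = Q) (heq : ∀ᵐ ω ∂Pr, ∀ n, N ω ≤ n → Zh n ω = proj E Einf (k n) (Z ω))
    (l : ℕ) : ConvInDensity (fun n => (Qn n).map (proj E Einf l)) (Q.map (proj E Einf l)) := by
  have hproj := measurable_proj E Einf l
  have := fun n => Measure.isProbabilityMeasure_map (μ := Qn n) hproj.aemeasurable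
  have := Measure.isProbabilityMeasure_map (μ := Q) hproj.aemeasurable
  let trunc : ∀ n, l ≤ k n → (∀ i : Fin (k n), E i) → ∀ i : Fin l, E i :=
    fun n h b i => b (Fin.castLE h i)
  have htrunc : ∀ n h, Measurable (trunc n h) := fun n h => by fun_prop
  let Ws : ℕ → Ω → ∀ i : Fin l, E i := fun n =>
    if h : l ≤ k n then trunc n h ∘ Zh n else proj E Einf l ∘ Z
  refine convInDensity_of_coupling (Ws := Ws) (hproj.comp hZ) (fun n => ?_) hN ?_
    (by rw [← Measure.map_map hproj hZ, hlawZ]) ?_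
  · by_cases h : l ≤ k n
    · simpa [Ws, h] using (htrunc n h).comp (hZh n)
    · simpa [Ws, h] using hproj.comp hZ
  · filter_upwards [hk.eventually_ge_atTop l] with n h
    simp only [Ws, dif_pos h]
    rw [← Measure.map_map (htrunc n h) (hZh n), hlawZh, Measure.map_map (htrunc n h)
      (measurable_proj E Einf (k n))]
    rfl
  · filter_upwards [heq] with ω hω n hn
    by_cases h : l ≤ k n
    · simp only [Ws, dif_pos h, Function.comp_apply, hω n hn]
      rfl
    · simp only [Ws, dif_neg h, Function.comp_apply]

/-- Discrete-time version (Corollary 1): `Zₙᵏ → Zᵏ` in density for every `k` iff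
there exist integers `0 ≤ k₁ ≤ k₂ ≤ … → ∞`, a coupling
`(Ẑ₁^{k₁}, Ẑ₂^{k₂}, …, Ẑ)` of `Z₁^{k₁}, Z₂^{k₂}, …, Z`, and an `ℕ`-valued random
variable `N` such that `Ẑₙ^{kₙ} = Ẑ^{kₙ}` for all `n ≥ N`. -/
theorem stmt11 (E : ℕ → Type) [∀ i, MeasurableSpace (E i)]
    (Einf : Type) [MeasurableSpace Einf]
    (Qn : ℕ → Measure ((∀ i, E i) × Einf)) (Q : Measure ((∀ i, E i) × Einf))
    [∀ n, IsProbabilityMeasure (Qn n)] [IsProbabilityMeasure Q] :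
    (∀ k : ℕ, ConvInDensity (fun n => (Qn n).map (proj E Einf k))
        (Q.map (proj E Einf k))) ↔
      ∃ k : ℕ → ℕ, Monotone k ∧ Tendsto k atTop atTop ∧
        ∃ (Ω : Type) (_ : MeasurableSpace Ω) (Pr : Measure Ω),
          IsProbabilityMeasure Pr ∧
          ∃ (Zh : ∀ n, Ω → (∀ i : Fin (k n), E i)) (Z : Ω → (∀ i, E i) × Einf)
            (N : Ω → ℕ),
            (∀ n, Measurable (Zh n)) ∧ Measurable Z ∧ Measurable N ∧
            (∀ n, Pr.map (Zh n) = (Qn n).map (proj E Einf (k n))) ∧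
            Pr.map Z = Q ∧
            (∀ᵐ ω ∂Pr, ∀ n, N ω ≤ n → Zh n ω = proj E Einf (k n) (Z ω)) := by
  refine ⟨exists_coupling_of_forall_convInDensity Qn Q (measurable_proj E Einf), ?_⟩
  rintro ⟨k, -, hk, Ω, _, Pr, hPr, Zh, Z, N, hZh, hZ, hN, hlawZh, hlawZ, heq⟩
  exact convInDensity_proj_of_coupling E Einf Qn Q hk Pr hZh hZ hN hlawZh hlawZ heq
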